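/- For each integer n ≥ 2 let u_n denote the number of tuples x = (x_1, …, x_{n−1}) of nonnegative integers satisfying (Ax)_i ≥ 0 for all 1 ≤ i ≤ n−1 (with x_0 = x_n = 0) and x_1 + x_{n−1} ≤ 3. Then for all n ≥ 2, u_n = (1/(n+3)) · Σ_{d | gcd(n,3)} φ(d) · C((n+3)/d, 3/d), where φ is the Euler totient function and C(·,·) is the binomial coefficient; explicitly, u_n = (n+2)(n+1)/6 if 3 does not divide n, and u_n = (n² + 3n + 6)/6 if 3 divides n. -/

import Mathlib

/-!
A tuple `x` in the set counted by `uCount n` is a concave lattice path from `0` to `0`. If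
`x 1 ≥ 3`, then `x (n - 1) = 0` and concavity forces `x ≡ 0`; so the slopes `x (j + 1) - x j`
lie in `[-2, 2]`, and the path is determined by the four breakpoints `a ≤ b ≤ c ≤ d ≤ n` at which
the slope drops below `2, 1, 0, -1`. These satisfy `a + b + c + d = 2n` (the path returns to `0`)
and `a = 0 ∨ d = n` (this is `x 1 + x (n - 1) ≤ 3`). Such quadruples are partitions of `n`, or of
`n - 3`, into parts at most `3`, and a two-step recursion counts them:
`6 u_n = (n + 1)(n + 2) + 4 [3 ∣ n]`, which is also the value of the divisor sum.
-/

/-- `uCount n` is the number of nonnegative integer tuples `(x_1, …, x_{n-1})` with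
`(Ax)_i ≥ 0` for all `1 ≤ i ≤ n-1` (with `x_0 = x_n = 0`) and `x_1 + x_{n-1} ≤ 3`,
i.e. the number of maximal dominant weights of the level-3 module `V(3Λ_0)`.
(Tuples are encoded as functions `ℕ → ℤ` vanishing at `0` and from `n` on.) -/
noncomputable def uCount (n : ℕ) : ℕ :=
  Set.ncard {x : ℕ → ℤ |
    (∀ i, i = 0 ∨ n ≤ i → x i = 0) ∧
    (∀ i, 1 ≤ i → i ≤ n - 1 → 0 ≤ x i) ∧
    (∀ i, 1 ≤ i → i ≤ n - 1 → 0 ≤ -x (i - 1) + 2 * x i - x (i + 1)) ∧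
    x 1 + x (n - 1) ≤ 3}

open Finset fwdDiff

lemma antitoneOn_Iio_of_succ_le {α : Type*} [Preorder α] {f : ℕ → α} {n : ℕ}
    (hf : ∀ j, j + 1 < n → f (j + 1) ≤ f j) : AntitoneOn f (Set.Iio n) :=
  antitoneOn_of_succ_le Set.ordConnected_Iio fun j _ _ hj => hf j hj

lemma Nat.lt_count_iff_of_antitoneOn {p : ℕ → Prop} [DecidablePred p] {n j : ℕ}
    (hp : AntitoneOn p (Set.Iio n)) (hj : j < n) : j < Nat.count p n ↔ p j := by
  induction n with
  | zero => omega
  | succ n ih =>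
    rw [Nat.count_succ]
    by_cases hpn : p n
    · have hall : ∀ k < n, p k := fun k hk =>
        hp (Set.mem_Iio.2 (by omega)) (Set.mem_Iio.2 (Nat.lt_succ_self n)) hk.le hpn
      rw [if_pos hpn, Nat.count_iff_forall.mpr hall]
      exact ⟨fun _ => if h : j < n then hall j h else by rwa [show j = n by omega],
        fun _ => by omega⟩
    · rw [if_neg hpn, add_zero]
      rcases Nat.lt_succ_iff_lt_or_eq.mp hj with hj | rfl
      · exact ih (hp.mono fun k hk => Nat.lt_succ_of_lt hk) hj
      · simpa [hpn] using Nat.count_le (p := p)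

lemma Nat.count_eq_of_forall_iff {p : ℕ → Prop} [DecidablePred p] {n m : ℕ} (hm : m ≤ n)
    (h : ∀ j < n, p j ↔ j < m) : Nat.count p n = m := by
  rw [Nat.count_eq_card_filter_range, ← card_range m]
  congr 1
  ext j
  simp only [mem_filter, mem_range]
  constructor
  · exact fun ⟨hj, hpj⟩ => (h j hj).1 hpj
  · exact fun hj => ⟨by omega, (h j (by omega)).2 hj⟩

def maxDominantWeights (n : ℕ) : Set (ℕ → ℤ) :=
  {x | (∀ i, i = 0 ∨ n ≤ i → x i = 0) ∧
    (∀ i, 1 ≤ i → i ≤ n - 1 → 0 ≤ x i) ∧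
    (∀ i, 1 ≤ i → i ≤ n - 1 → 0 ≤ -x (i - 1) + 2 * x i - x (i + 1)) ∧
    x 1 + x (n - 1) ≤ 3}

lemma antitoneOn_fwdDiff {n : ℕ} {x : ℕ → ℤ} (hx : x ∈ maxDominantWeights n) :
    AntitoneOn (Δ_[1] x) (Set.Iio n) := by
  obtain ⟨-, -, hconc, -⟩ := hx
  refine antitoneOn_Iio_of_succ_le fun j hj => ?_
  have := hconc (j + 1) (by omega) (by omega)
  simp only [fwdDiff, Nat.add_sub_cancel] at this ⊢
  omega

lemma fwdDiff_mem_Icc {n : ℕ} (hn : 2 ≤ n) {x : ℕ → ℤ} (hx : x ∈ maxDominantWeights n)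
    {j : ℕ} (hj : j < n) : Δ_[1] x j ∈ Set.Icc (-2) 2 := by
  have hanti := antitoneOn_fwdDiff hx
  obtain ⟨hzero, hpos, -, hends⟩ := hx
  have hfirst : Δ_[1] x 0 = x 1 := by simp [fwdDiff, hzero 0 (by simp)]
  have hlast : Δ_[1] x (n - 1) = - x (n - 1) := by
    simp [fwdDiff, Nat.sub_add_cancel (by omega : 1 ≤ n), hzero n (by simp)]
  have htotal : ∑ j ∈ range n, Δ_[1] x j = 0 := by
    rw [show ∑ j ∈ range n, Δ_[1] x j = x n - x 0 from sum_range_sub x n, hzero n (by simp),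
      hzero 0 (by simp), sub_zero]
  have hle : ∀ j < n, Δ_[1] x j ≤ x 1 := fun j hj =>
    hfirst ▸ hanti (Set.mem_Iio.2 (by omega)) hj (Nat.zero_le j)
  have hge : ∀ j < n, - x (n - 1) ≤ Δ_[1] x j := fun j hj =>
    hlast ▸ hanti hj (Set.mem_Iio.2 (by omega)) (by omega)
  -- If `x 1 ≥ 3` then `x (n - 1) = 0`, so all slopes are nonnegative; summing to `0`, they
  -- vanish, and so does `x 1`. Symmetrically for `x (n - 1)`.
  have h1 : x 1 ≤ 2 := by
    by_contra! h
    have : ∀ j ∈ range n, 0 ≤ Δ_[1] x j := fun j hj =>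
      (neg_nonneg.2 (by linarith [hpos (n - 1) (by omega) le_rfl])).trans (hge j (mem_range.1 hj))
    have := (sum_eq_zero_iff_of_nonneg this).1 htotal 0 (by simp; omega)
    omega
  have h2 : x (n - 1) ≤ 2 := by
    by_contra! h
    have : ∀ j ∈ range n, Δ_[1] x j ≤ 0 := fun j hj =>
      (hle j (mem_range.1 hj)).trans (by linarith [hpos 1 le_rfl (by omega)])
    have := (sum_eq_zero_iff_of_nonpos this).1 htotal (n - 1) (by simp; omega)
    omega
  exact ⟨by linarith [hge j hj], by linarith [hle j hj]⟩

def slopeCount (n : ℕ) (x : ℕ → ℤ) (v : ℤ) : ℕ := Nat.count (fun j => v ≤ Δ_[1] x j) n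

/-- The slope `Δ_[1] x j` of a tuple in `maxDominantWeights n` is `#{v | j < k_v} - 2`, where
`(k_2, k_1, k_0, k_{-1})` are the positions at which it drops below `2, 1, 0, -1`. -/
def breakpoints (n : ℕ) (x : ℕ → ℤ) : ℕ × ℕ × ℕ × ℕ :=
  (slopeCount n x 2, slopeCount n x 1, slopeCount n x 0, slopeCount n x (-1))

def ofBreakpoints (n : ℕ) : ℕ × ℕ × ℕ × ℕ → ℕ → ℤ
  | (a, b, c, d), i => ((min i a + min i b + min i c + min i d : ℕ) : ℤ) - 2 * (min i n : ℕ)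

def admissibleBreakpoints (n : ℕ) : Finset (ℕ × ℕ × ℕ × ℕ) :=
  {k ∈ range (n + 1) ×ˢ range (n + 1) ×ˢ range (n + 1) ×ˢ range (n + 1) |
    k.1 ≤ k.2.1 ∧ k.2.1 ≤ k.2.2.1 ∧ k.2.2.1 ≤ k.2.2.2 ∧
    k.1 + k.2.1 + k.2.2.1 + k.2.2.2 = 2 * n ∧ (k.1 = 0 ∨ k.2.2.2 = n)}

@[simp]
lemma mem_admissibleBreakpoints {n a b c d : ℕ} :
    (a, b, c, d) ∈ admissibleBreakpoints n ↔
      a ≤ b ∧ b ≤ c ∧ c ≤ d ∧ d ≤ n ∧ a + b + c + d = 2 * n ∧ (a = 0 ∨ d = n) := by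
  simp only [admissibleBreakpoints, mem_filter, mem_product, mem_range]
  omega

lemma lt_slopeCount_iff {n : ℕ} {x : ℕ → ℤ} (hx : x ∈ maxDominantWeights n) (v : ℤ) {j : ℕ}
    (hj : j < n) : j < slopeCount n x v ↔ v ≤ Δ_[1] x j :=
  Nat.lt_count_iff_of_antitoneOn
    (fun _ hi _ hk hik hv => hv.trans (antitoneOn_fwdDiff hx hi hk hik)) hj

lemma eq_ofBreakpoints_breakpoints {n : ℕ} (hn : 2 ≤ n) {x : ℕ → ℤ}
    (hx : x ∈ maxDominantWeights n) {i : ℕ} (hi : i ≤ n) :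
    x i = ofBreakpoints n (breakpoints n x) i := by
  induction i with
  | zero => simp [ofBreakpoints, hx.1 0 (by simp)]
  | succ i ih =>
    have h2 := lt_slopeCount_iff hx 2 hi
    have h1 := lt_slopeCount_iff hx 1 hi
    have h0 := lt_slopeCount_iff hx 0 hi
    have hm := lt_slopeCount_iff hx (-1) hi
    have hbound := fwdDiff_mem_Icc hn hx hi
    have hstep : x (i + 1) = x i + Δ_[1] x i := by simp [fwdDiff]
    simp only [breakpoints, ofBreakpoints, Set.mem_Icc] at ih h2 h1 h0 hm hbound ⊢
    omega

lemma breakpoints_mem {n : ℕ} (hn : 2 ≤ n) {x : ℕ → ℤ} (hx : x ∈ maxDominantWeights n) :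
    breakpoints n x ∈ admissibleBreakpoints n := by
  have hmono {v w : ℤ} (hvw : v ≤ w) : slopeCount n x w ≤ slopeCount n x v :=
    Nat.count_mono_left fun _ _ h => hvw.trans h
  have hle (v : ℤ) : slopeCount n x v ≤ n := Nat.count_le _
  have hn0 := eq_ofBreakpoints_breakpoints hn hx le_rfl
  have h1 := eq_ofBreakpoints_breakpoints hn hx (by omega : 1 ≤ n)
  have hn1 := eq_ofBreakpoints_breakpoints hn hx (by omega : n - 1 ≤ n)
  have h21 := hmono (by norm_num : (1 : ℤ) ≤ 2)
  have h10 := hmono (by norm_num : (0 : ℤ) ≤ 1)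
  have h0m := hmono (by norm_num : (-1 : ℤ) ≤ 0)
  have hm := hle (-1)
  obtain ⟨hzero, -, -, hends⟩ := hx
  rw [hzero n (by simp)] at hn0
  simp only [breakpoints, ofBreakpoints, mem_admissibleBreakpoints] at *
  omega

lemma ofBreakpoints_breakpoints {n : ℕ} (hn : 2 ≤ n) {x : ℕ → ℤ}
    (hx : x ∈ maxDominantWeights n) : ofBreakpoints n (breakpoints n x) = x := by
  funext i
  rcases le_or_gt i n with hi | hi
  · exact (eq_ofBreakpoints_breakpoints hn hx hi).symm
  · have hk := breakpoints_mem hn hx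
    rw [hx.1 i (by omega)]
    simp only [breakpoints, ofBreakpoints, mem_admissibleBreakpoints] at hk ⊢
    omega

lemma ofBreakpoints_mem {n : ℕ} {k : ℕ × ℕ × ℕ × ℕ} (hk : k ∈ admissibleBreakpoints n) :
    ofBreakpoints n k ∈ maxDominantWeights n := by
  obtain ⟨a, b, c, d⟩ := k
  simp only [mem_admissibleBreakpoints] at hk
  refine ⟨?_, ?_, ?_, ?_⟩ <;> simp only [ofBreakpoints] <;> omega

lemma breakpoints_ofBreakpoints {n : ℕ} {k : ℕ × ℕ × ℕ × ℕ}
    (hk : k ∈ admissibleBreakpoints n) : breakpoints n (ofBreakpoints n k) = k := by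
  obtain ⟨a, b, c, d⟩ := k
  simp only [mem_admissibleBreakpoints] at hk
  simp only [breakpoints, slopeCount, Prod.mk.injEq]
  refine ⟨?_, ?_, ?_, ?_⟩ <;> refine Nat.count_eq_of_forall_iff (by omega) fun j hj => ?_ <;>
    simp only [fwdDiff, ofBreakpoints] <;> omega

lemma uCount_eq_card_admissibleBreakpoints {n : ℕ} (hn : 2 ≤ n) :
    uCount n = #(admissibleBreakpoints n) := by
  have hbij : Set.BijOn (ofBreakpoints n) (admissibleBreakpoints n) (maxDominantWeights n) :=
    Set.InvOn.bijOn ⟨fun _ hk => breakpoints_ofBreakpoints hk,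
        fun _ hx => ofBreakpoints_breakpoints hn hx⟩
      (fun _ hk => ofBreakpoints_mem hk) (fun _ hx => breakpoints_mem hn hx)
  rw [uCount, ← Set.ncard_coe_finset, hbij.ncard_eq]
  rfl

/-- `(e, i, j)` encodes the partition of `n - 3e` into parts at most `3` with `i` threes and
`j` twos. -/
def smallPartitions (n : ℕ) : Finset (ℕ × ℕ × ℕ) :=
  {t ∈ range 2 ×ˢ range (n + 1) ×ˢ range (n + 1) | 3 * t.1 + 3 * t.2.1 + 2 * t.2.2 ≤ n}

@[simp]
lemma mem_smallPartitions {n e i j : ℕ} :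
    (e, i, j) ∈ smallPartitions n ↔ e < 2 ∧ 3 * e + 3 * i + 2 * j ≤ n := by
  simp only [smallPartitions, mem_filter, mem_product, mem_range]
  omega

lemma card_smallPartitions_add_two (n : ℕ) :
    #(smallPartitions (n + 2)) = #(smallPartitions n) + (2 * ((n + 2) / 3) + 1) := by
  -- Remove one part `2` if there is one; otherwise `(e, i, 0)` is listed as `2 * i + e`.
  rw [← card_filter_add_card_filter_not (fun t => t.2.2 ≠ 0)]
  congr 1
  · refine card_nbij' (fun t => (t.1, t.2.1, t.2.2 - 1)) (fun t => (t.1, t.2.1, t.2.2 + 1))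
      ?_ ?_ ?_ ?_ <;>
      simp only [Set.MapsTo, Set.LeftInvOn, coe_filter, Set.mem_ofPred_eq, mem_coe, Prod.forall,
        mem_smallPartitions, Prod.mk.injEq, true_and] <;>
      omega
  · rw [← card_range (2 * ((n + 2) / 3) + 1)]
    refine card_nbij' (fun t => 2 * t.2.1 + t.1) (fun m => (m % 2, m / 2, 0))
      ?_ ?_ ?_ ?_ <;>
      simp only [Set.MapsTo, Set.LeftInvOn, coe_filter, Set.mem_ofPred_eq, mem_coe, Prod.forall,
        mem_smallPartitions, Prod.mk.injEq, mem_range] <;>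
      omega

lemma six_mul_card_smallPartitions (n : ℕ) :
    6 * #(smallPartitions n) = (n + 1) * (n + 2) + if 3 ∣ n then 4 else 0 := by
  induction n using Nat.twoStepInduction with
  | zero => decide
  | one => decide
  | more n ih _ =>
    rw [card_smallPartitions_add_two, mul_add, ih]
    have : (n + 2) / 3 * 3 + (n + 2) % 3 = n + 2 := Nat.div_add_mod' _ _
    split_ifs <;> ring_nf <;> omega

/-- Breakpoints with `d = n` are the partitions `a ≤ b ≤ c` of `n`; those with `a = 0` and `d < n`
give the partitions `n - d ≤ n - c ≤ n - b` of `n` into three positive parts, i.e. partitions of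
`n - 3`. Each is recorded by the multiplicities of `3` and `2` in its conjugate. -/
lemma card_admissibleBreakpoints (n : ℕ) :
    #(admissibleBreakpoints n) = #(smallPartitions n) := by
  refine card_nbij'
    (fun ⟨a, b, c, d⟩ => if d = n then (0, a, b - a) else (1, n - 1 - d, d - c))
    (fun ⟨e, i, j⟩ => if e = 0 then (i, i + j, n - 2 * i - j, n)
      else (0, 2 * i + j + 2, n - 1 - i - j, n - 1 - i)) ?_ ?_ ?_ ?_
  · rintro ⟨a, b, c, d⟩ hk
    simp only [mem_coe, mem_admissibleBreakpoints] at hk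
    dsimp only
    split_ifs <;> simp only [mem_coe, mem_smallPartitions] <;> omega
  · rintro ⟨e, i, j⟩ ht
    simp only [mem_coe, mem_smallPartitions] at ht
    dsimp only
    split_ifs <;> simp only [mem_coe, mem_admissibleBreakpoints, or_true, true_or, and_true] <;>
      omega
  · rintro ⟨a, b, c, d⟩ hk
    simp only [mem_coe, mem_admissibleBreakpoints] at hk
    dsimp only
    split_ifs <;> simp only [Prod.mk.injEq, true_and, not_true_eq_false] at * <;> omega
  · rintro ⟨e, i, j⟩ ht
    simp only [mem_coe, mem_smallPartitions] at ht
    dsimp only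
    split_ifs <;> simp only [Prod.mk.injEq, true_and, not_true_eq_false] at * <;> omega

lemma six_mul_uCount {n : ℕ} (hn : 2 ≤ n) :
    6 * uCount n = (n + 1) * (n + 2) + if 3 ∣ n then 4 else 0 := by
  rw [uCount_eq_card_admissibleBreakpoints hn, card_admissibleBreakpoints,
    six_mul_card_smallPartitions]

lemma cast_choose_add_three_div (n : ℕ) :
    (((n + 3).choose 3 : ℕ) : ℚ) / (n + 3) = (n + 1) * (n + 2) / 6 := by
  have h : ((n + 2 + 1 : ℕ) : ℚ) * (n + 2).choose 2 = (n + 3).choose 3 * 3 := by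
    exact_mod_cast Nat.add_one_mul_choose_eq (n + 2) 2
  rw [Nat.cast_choose_two] at h
  push_cast at h
  field_simp
  linear_combination -2 * h

lemma sum_totient_mul_choose_div (n : ℕ) :
    (1 / ((n : ℚ) + 3)) * ∑ d ∈ (Nat.gcd n 3).divisors,
        (Nat.totient d : ℚ) * (Nat.choose ((n + 3) / d) (3 / d) : ℚ) =
      (((n + 1) * (n + 2) + if 3 ∣ n then 4 else 0 : ℕ) : ℚ) / 6 := by
  have hchoose := cast_choose_add_three_div n
  by_cases h : 3 ∣ n
  · obtain ⟨t, rfl⟩ := h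
    rw [Nat.gcd_eq_right (dvd_mul_right 3 t), Nat.prime_three.divisors,
      sum_insert (by decide), sum_singleton, Nat.totient_prime Nat.prime_three,
      if_pos (dvd_mul_right 3 t), show (3 * t + 3) / 3 = t + 1 by omega]
    simp only [Nat.div_one, Nat.totient_one, Nat.div_self three_pos, Nat.choose_one_right]
    push_cast at hchoose ⊢
    field_simp at hchoose ⊢
    linear_combination hchoose
  · rw [Nat.Coprime.gcd_eq_one ((Nat.Prime.coprime_iff_not_dvd Nat.prime_three).2 h).symm,
      Nat.divisors_one, sum_singleton, if_neg h]
    simp only [Nat.div_one, Nat.totient_one]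
    push_cast
    linear_combination hchoose

/-- Lemma 2.7 of Jayne–Misra: for all `n ≥ 2`,
`u_n = (1/(n+3)) Σ_{d | gcd(n,3)} φ(d) C((n+3)/d, 3/d)`; explicitly,
`u_n = (n+2)(n+1)/6` if `3 ∤ n` and `u_n = (n² + 3n + 6)/6` if `3 ∣ n`. -/
theorem stmt_12 (n : ℕ) (hn : 2 ≤ n) :
    (uCount n : ℚ) = (1 / ((n : ℚ) + 3)) *
        ∑ d ∈ (Nat.gcd n 3).divisors,
          (Nat.totient d : ℚ) * (Nat.choose ((n + 3) / d) (3 / d) : ℚ) ∧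
    (¬ (3 ∣ n) → (uCount n : ℚ) = ((n : ℚ) + 2) * ((n : ℚ) + 1) / 6) ∧
    ((3 ∣ n) → (uCount n : ℚ) = ((n : ℚ) ^ 2 + 3 * n + 6) / 6) := by
  have hsix : (uCount n : ℚ) = (((n + 1) * (n + 2) + if 3 ∣ n then 4 else 0 : ℕ) : ℚ) / 6 := by
    rw [← six_mul_uCount hn]
    push_cast
    ring
  refine ⟨hsix.trans (sum_totient_mul_choose_div n).symm, fun h => ?_, fun h => ?_⟩
  · rw [hsix, if_neg h]
    push_cast
    ring
  · rw [hsix, if_pos h]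
    push_cast
    ring
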